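/- arXiv:2210.10003 — 2 statements merged into one kernel-verified Lean document; each statement's English description precedes it below -/
import Mathlib

section
/- Let f(ω) = min_{Z ∈ K} F(ω,Z) where K is a compact metric space, F : Θ × K → ℝ is continuous, and F(·,Z) is affine in ω for each Z. Then for every ω₀ ∈ Θ and every feasible direction v (i.e., ω₀ + tv ∈ Θ for small t > 0), the one-sided directional derivative Df(ω₀; v) = lim_{t→0⁺} (f(ω₀+tv) − f(ω₀))/t exists and equals min_{Z ∈ Z(ω₀)} DᵥF(ω₀, Z), where Z(ω₀) is the set of minimizers of F(ω₀, ·) over K and DᵥF(ω₀,Z) is the directional derivative of the affine map F(·,Z) along v. -/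
/-!
Danskin's envelope argument. Write `F (ω₀ + t • v) = p + t • g` with `p = F ω₀`. Testing the
infimum at a minimizer `Z` of `p` bounds the difference quotient above by `g Z`, hence by the
least value `L` of `g` on the minimizers of `p`. Conversely, a minimizer `Zₜ` of `p + t • g`
satisfies `p Zₜ - min p ≤ t • (L - g Zₜ) = O(t)`, so `Zₜ` lies in an arbitrarily thin sublevel set
of `p`; by compactness `g > L - δ` there, and the quotient is at least `g Zₜ`.
-/

open Filter Topology

theorem ciInf_eq_of_forall_le {ι α : Type*} [Nonempty ι] [ConditionallyCompleteLinearOrder α]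
    {q : ι → α} {i : ι} (h : ∀ j, q i ≤ q j) : ⨅ j, q j = q i :=
  ciInf_eq_of_forall_ge_of_forall_gt_exists_lt h fun _ hw => ⟨i, hw⟩

theorem Continuous.exists_forall_le_of_compactSpace {K α : Type*} [TopologicalSpace K]
    [CompactSpace K] [Nonempty K] [LinearOrder α] [TopologicalSpace α] [ClosedIicTopology α]
    {f : K → α} (hf : Continuous f) : ∃ x, ∀ y, f x ≤ f y :=
  hf.exists_forall_le' (Classical.arbitrary K) (by simp [cocompact_eq_bot])

section Envelope

variable {K : Type*} [TopologicalSpace K] [CompactSpace K] {p g : K → ℝ}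

theorem exists_pos_sublevel_subset_of_isOpen (hp : Continuous p) {U : Set K} (hU : IsOpen U)
    {m : ℝ} (h : {Z | p Z ≤ m} ⊆ U) : ∃ η > 0, {Z | p Z < m + η} ⊆ U := by
  obtain ⟨a, hma, ha⟩ := hU.isClosed_compl.isCompact.exists_forall_le' hp.continuousOn
    fun Z hZ => lt_of_not_ge fun hle => hZ (h hle)
  refine ⟨a - m, sub_pos.2 hma, fun Z hZ => by_contra fun hZU => ?_⟩
  have hpZ : p Z < m + (a - m) := hZ
  linarith [ha Z hZU]

variable [Nonempty K]

theorem exists_isLeast_image_argmin (hp : Continuous p) (hg : Continuous g) :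
    ∃ L, IsLeast {l | ∃ Z, (∀ Y, p Z ≤ p Y) ∧ l = g Z} L := by
  obtain ⟨Z₀, hZ₀⟩ := hp.exists_forall_le_of_compactSpace
  obtain ⟨Z, hZ, hmin⟩ := (isClosed_le hp continuous_const).isCompact.exists_isMinOn
    ⟨Z₀, le_refl (p Z₀)⟩ hg.continuousOn
  refine ⟨g Z, ⟨Z, fun Y => hZ.trans (hZ₀ Y), rfl⟩, ?_⟩
  rintro _ ⟨Y, hY, rfl⟩
  exact hmin (hY Z₀)

theorem exists_bounds_iInf_add_mul_sub_div (hp : Continuous p) (hg : Continuous g) {Z₀ : K}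
    (hZ₀ : ∀ Y, p Z₀ ≤ p Y) {t : ℝ} (ht : 0 < t) :
    ∃ Zt, g Zt ≤ ((⨅ Z, p Z + t * g Z) - ⨅ Z, p Z) / t ∧
      ((⨅ Z, p Z + t * g Z) - ⨅ Z, p Z) / t ≤ g Z₀ ∧ p Zt - p Z₀ ≤ t * (g Z₀ - g Zt) := by
  obtain ⟨Zt, hZt⟩ :=
    (show Continuous fun Z => p Z + t * g Z by fun_prop).exists_forall_le_of_compactSpace
  rw [ciInf_eq_of_forall_le hZt, ciInf_eq_of_forall_le hZ₀]
  have hle := hZt Z₀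
  have hge := hZ₀ Zt
  refine ⟨Zt, ?_, ?_, by linarith⟩
  · rw [le_div_iff₀ ht]; linarith
  · rw [div_le_iff₀ ht]; linarith

theorem tendsto_iInf_add_mul_sub_div (hp : Continuous p) (hg : Continuous g) {L : ℝ}
    (hL : IsLeast {l | ∃ Z, (∀ Y, p Z ≤ p Y) ∧ l = g Z} L) :
    Tendsto (fun t => ((⨅ Z, p Z + t * g Z) - ⨅ Z, p Z) / t) (𝓝[>] 0) (𝓝 L) := by
  obtain ⟨⟨Z₀, hZ₀, rfl⟩, hLle⟩ := hL
  obtain ⟨Zg, hZg⟩ := hg.exists_forall_le_of_compactSpace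
  rw [tendsto_order]
  constructor
  · intro a ha
    obtain ⟨η, hη, hsub⟩ := exists_pos_sublevel_subset_of_isOpen hp (isOpen_lt continuous_const hg)
      fun Z (hZ : p Z ≤ p Z₀) => ha.trans_le (hLle ⟨Z, fun Y => hZ.trans (hZ₀ Y), rfl⟩)
    have hsmall : ∀ᶠ t in 𝓝[>] (0 : ℝ), t * (g Z₀ - g Zg) < η := by
      have : Tendsto (fun t : ℝ => t * (g Z₀ - g Zg)) (𝓝 0) (𝓝 0) :=
        (continuous_mul_const _).tendsto' 0 0 (zero_mul _)
      exact (this.mono_left nhdsWithin_le_nhds).eventually (gt_mem_nhds hη)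
    filter_upwards [self_mem_nhdsWithin, hsmall] with t (ht : 0 < t) hsmall
    obtain ⟨Zt, hlow, -, hnear⟩ := exists_bounds_iInf_add_mul_sub_div hp hg hZ₀ ht
    have : t * g Zg ≤ t * g Zt := mul_le_mul_of_nonneg_left (hZg Zt) ht.le
    exact (hsub (show p Zt < p Z₀ + η by linarith)).trans_le hlow
  · intro a ha
    filter_upwards [self_mem_nhdsWithin] with t (ht : 0 < t)
    obtain ⟨Zt, -, hup, -⟩ := exists_bounds_iInf_add_mul_sub_div hp hg hZ₀ ht
    exact hup.trans_lt ha

end Envelope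

theorem directional_derivative_of_min_general (k n : ℕ) (K : Type*)
    [TopologicalSpace K] [CompactSpace K] [Nonempty K]
    (a : K → ℝ) (c : K → Matrix (Fin k) (Fin n) ℝ)
    (ha : Continuous a) (hc : Continuous c)
    (F : Matrix (Fin k) (Fin n) ℝ → K → ℝ)
    (hF : ∀ ω Z, F ω Z = a Z + ∑ i, ∑ j, c Z i j * ω i j)
    (ω₀ : Matrix (Fin k) (Fin n) ℝ)
    (v : Matrix (Fin k) (Fin n) ℝ) :
    ∃ L : ℝ,
      IsLeast {l : ℝ | ∃ Z : K, (∀ Y : K, F ω₀ Z ≤ F ω₀ Y) ∧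
        l = ∑ i, ∑ j, v i j * c Z i j} L ∧
      Tendsto (fun t : ℝ =>
          ((⨅ Z : K, F (ω₀ + t • v) Z) - ⨅ Z : K, F ω₀ Z) / t)
        (𝓝[>] 0) (𝓝 L) := by
  set g : K → ℝ := fun Z => ∑ i, ∑ j, v i j * c Z i j
  have hcij (i : Fin k) (j : Fin n) : Continuous fun Z => c Z i j :=
    (continuous_apply_apply i j).comp hc
  have hg : Continuous g := by fun_prop
  have hp : Continuous (F ω₀) := by
    rw [funext (hF ω₀)]
    fun_prop
  have hFt (t : ℝ) (Z : K) : F (ω₀ + t • v) Z = F ω₀ Z + t * g Z := by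
    have hij (i : Fin k) (j : Fin n) :
        c Z i j * (ω₀ + t • v) i j = c Z i j * ω₀ i j + t * (v i j * c Z i j) := by
      simp only [Matrix.add_apply, Matrix.smul_apply, smul_eq_mul]
      ring
    simp only [hF, g, hij, Finset.sum_add_distrib, Finset.mul_sum, add_assoc]
  obtain ⟨L, hL⟩ := exists_isLeast_image_argmin hp hg
  exact ⟨L, hL, by simpa only [hFt] using tendsto_iInf_add_mul_sub_div hp hg hL⟩

/-- For `f ω = ⨅ Z, F ω Z` with `F` jointly continuous on a compact set of centroids and
affine in `ω`, the one-sided directional derivative of `f` at `ω₀` along a feasible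
direction `v` exists and equals the minimum, over the minimizers `Z` of `F ω₀ ·`,
of the directional derivative `∑ i j, v i j * c Z i j` of the affine map `F (·, Z)`. -/
theorem directional_derivative_of_min (k n : ℕ) (K : Type*)
    [TopologicalSpace K] [CompactSpace K] [Nonempty K]
    (Θ : Set (Matrix (Fin k) (Fin n) ℝ)) (hΘ : Convex ℝ Θ)
    (a : K → ℝ) (c : K → Matrix (Fin k) (Fin n) ℝ)
    (ha : Continuous a) (hc : Continuous c)
    (F : Matrix (Fin k) (Fin n) ℝ → K → ℝ)
    (hF : ∀ ω Z, F ω Z = a Z + ∑ i, ∑ j, c Z i j * ω i j)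
    (ω₀ : Matrix (Fin k) (Fin n) ℝ) (hω₀ : ω₀ ∈ Θ)
    (v : Matrix (Fin k) (Fin n) ℝ)
    (hfeas : ∃ ε > (0 : ℝ), ∀ t : ℝ, 0 < t → t < ε → ω₀ + t • v ∈ Θ) :
    ∃ L : ℝ,
      IsLeast {l : ℝ | ∃ Z : K, (∀ Y : K, F ω₀ Z ≤ F ω₀ Y) ∧
        l = ∑ i, ∑ j, v i j * c Z i j} L ∧
      Tendsto (fun t : ℝ =>
          ((⨅ Z : K, F (ω₀ + t • v) Z) - ⨅ Z : K, F ω₀ Z) / t)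
        (𝓝[>] 0) (𝓝 L) :=
  directional_derivative_of_min_general k n K a c ha hc F hF ω₀ v
end

section
/- In the k-means iteration, if the cluster assignment does not change from iteration t to t+1 (ω^{(t+1)} = ω^{(t)}) and Z^{(t)} already minimizes F(ω^{(t)}, ·), then (ω^{(t)}, Z^{(t)}) is a partial optimal point of the relaxed problem; in particular, the linearity of F in ω implies ω^{(t)} (a nearest-centroid 0–1 assignment) minimizes F(·, Z^{(t)}) over all column-stochastic matrices, not just over 0–1 matrices. -/
/-!
`F(·, Z)` is linear in `ω` and splits over the columns, so it suffices to minimize each column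
`∑ i, ω' i j * d(D_j, Z_i)²` over the probability simplex. A linear function on the simplex is
bounded below by its least coefficient, and a weight vector supported on the minimal coefficients
attains that bound.
-/

open Finset

section SimplexMinimum

variable {ι : Type*} [Fintype ι]

lemma le_sum_mul_of_le {w : ι → ℝ} {c : ι → ℝ} {m : ℝ} (hw : ∀ i, 0 ≤ w i) (hsum : ∑ i, w i = 1)
    (hm : ∀ i, m ≤ c i) : m ≤ ∑ i, w i * c i :=
  calc m = ∑ i, w i * m := by rw [← sum_mul, hsum, one_mul]
    _ ≤ ∑ i, w i * c i := sum_le_sum fun i _ => mul_le_mul_of_nonneg_left (hm i) (hw i)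

lemma sum_mul_eq_of_support_minimizing {w : ι → ℝ} {c : ι → ℝ} (hsum : ∑ i, w i = 1)
    (hmin : ∀ i, w i ≠ 0 → ∀ l, c i ≤ c l) {i₀ : ι} (hi₀ : w i₀ ≠ 0) :
    ∑ i, w i * c i = c i₀ := by
  have hconst : ∀ i, w i * c i = w i * c i₀ := by
    intro i
    by_cases hi : w i = 0
    · simp [hi]
    · rw [le_antisymm (hmin i hi i₀) (hmin i₀ hi₀ i)]
  simp_rw [hconst, ← sum_mul, hsum, one_mul]

lemma sum_mul_le_sum_mul_of_support_minimizing {w w' : ι → ℝ} {c : ι → ℝ}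
    (hsum : ∑ i, w i = 1) (hmin : ∀ i, w i ≠ 0 → ∀ l, c i ≤ c l)
    (hw' : ∀ i, 0 ≤ w' i) (hsum' : ∑ i, w' i = 1) :
    ∑ i, w i * c i ≤ ∑ i, w' i * c i := by
  obtain ⟨i₀, hi₀⟩ : ∃ i₀, w i₀ ≠ 0 := by
    by_contra! h
    simp [h] at hsum
  rw [sum_mul_eq_of_support_minimizing hsum hmin hi₀]
  exact le_sum_mul_of_le hw' hsum' (hmin i₀ hi₀)

end SimplexMinimum

theorem stable_assignment_partial_optimal_general {X : Type*} [MetricSpace X] (k n : ℕ)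
    (D : Fin n → X) (S : Set X) (Z : Fin k → X)
    (ω : Matrix (Fin k) (Fin n) ℝ)
    (hω01 : ∀ i j, ω i j = 0 ∨ ω i j = 1)
    (hωcol : ∀ j, ∑ i, ω i j = 1)
    (hnear : ∀ i j, ω i j = 1 → ∀ l, dist (D j) (Z i) ^ 2 ≤ dist (D j) (Z l) ^ 2)
    (hZmin : ∀ Z' : Fin k → X, (∀ i, Z' i ∈ S) →
      ∑ i, ∑ j, ω i j * dist (D j) (Z i) ^ 2 ≤
        ∑ i, ∑ j, ω i j * dist (D j) (Z' i) ^ 2) :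
    (∀ ω' : Matrix (Fin k) (Fin n) ℝ,
      ((∀ i j, 0 ≤ ω' i j) ∧ ∀ j, ∑ i, ω' i j = 1) →
      ∑ i, ∑ j, ω i j * dist (D j) (Z i) ^ 2 ≤
        ∑ i, ∑ j, ω' i j * dist (D j) (Z i) ^ 2) ∧
    (∀ Z' : Fin k → X, (∀ i, Z' i ∈ S) →
      ∑ i, ∑ j, ω i j * dist (D j) (Z i) ^ 2 ≤
        ∑ i, ∑ j, ω i j * dist (D j) (Z' i) ^ 2) := by
  refine ⟨fun ω' ⟨hω'nonneg, hω'col⟩ => ?_, hZmin⟩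
  rw [sum_comm, sum_comm (f := fun i j => ω' i j * _)]
  refine sum_le_sum fun j _ => sum_mul_le_sum_mul_of_support_minimizing (hωcol j) ?_
    (fun i => hω'nonneg i j) (hω'col j)
  exact fun i hi => hnear i j ((hω01 i j).resolve_left hi)

/-- If the nearest-centroid 0–1 assignment `ω` is unchanged and `Z` already minimizes
`F(ω, ·)` over `S^k`, then `(ω, Z)` is a partial optimal point of the relaxed problem:
`ω` minimizes `F(·, Z)` over all column-stochastic matrices, and `Z` minimizes
`F(ω, ·)` over `S^k`. -/
theorem stable_assignment_partial_optimal {X : Type*} [MetricSpace X] (k n : ℕ)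
    (D : Fin n → X) (S : Set X) (Z : Fin k → X) (hZS : ∀ i, Z i ∈ S)
    (ω : Matrix (Fin k) (Fin n) ℝ)
    (hω01 : ∀ i j, ω i j = 0 ∨ ω i j = 1)
    (hωcol : ∀ j, ∑ i, ω i j = 1)
    (hnear : ∀ i j, ω i j = 1 → ∀ l, dist (D j) (Z i) ^ 2 ≤ dist (D j) (Z l) ^ 2)
    (hZmin : ∀ Z' : Fin k → X, (∀ i, Z' i ∈ S) →
      ∑ i, ∑ j, ω i j * dist (D j) (Z i) ^ 2 ≤
        ∑ i, ∑ j, ω i j * dist (D j) (Z' i) ^ 2) :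
    (∀ ω' : Matrix (Fin k) (Fin n) ℝ,
      ((∀ i j, 0 ≤ ω' i j) ∧ ∀ j, ∑ i, ω' i j = 1) →
      ∑ i, ∑ j, ω i j * dist (D j) (Z i) ^ 2 ≤
        ∑ i, ∑ j, ω' i j * dist (D j) (Z i) ^ 2) ∧
    (∀ Z' : Fin k → X, (∀ i, Z' i ∈ S) →
      ∑ i, ∑ j, ω i j * dist (D j) (Z i) ^ 2 ≤
        ∑ i, ∑ j, ω i j * dist (D j) (Z' i) ^ 2) :=
  stable_assignment_partial_optimal_general k n D S Z ω hω01 hωcol hnear hZmin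
end
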